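/- Let G be a ℤ-invariant valued abelian group in which every set Δ_m(g) = {v(g − m·g') : g' ∈ G} admits a maximum, and let (a_i)_{i∈I} be a pseudo-Cauchy sequence in G which has no pseudo-limit in G. Then for every g ∈ G and every m ∈ ℕ the sequence (v(m·a_i − g))_{i∈I} is eventually constant. -/

import Mathlib

universe u

/-- `v : G → Γ` is a valuation making the abelian group `G` a valued abelian group:
`Γ` is a linear order with greatest element `⊤` (denoted `∞` in the paper), `v` is
surjective, `v g = ⊤` iff `g = 0`, and `v (g - h) ≥ min (v g) (v h)`. -/
structure IsValuedGroup {G Γ : Type*} [AddCommGroup G] [LinearOrder Γ] [OrderTop Γ]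
    (v : G → Γ) : Prop where
  surjective : Function.Surjective v
  eq_top_iff : ∀ g : G, v g = ⊤ ↔ g = 0
  min_le_sub : ∀ g h : G, min (v g) (v h) ≤ v (g - h)

/-- A sequence `a` indexed by a linearly ordered set `I` is pseudo-Cauchy if eventually
`v (a i - a j) < v (a j - a k)` for `i < j < k`. -/
def IsPseudoCauchy {G Γ I : Type*} [AddCommGroup G] [LinearOrder Γ] [LinearOrder I]
    (v : G → Γ) (a : I → G) : Prop :=
  ∃ i₀ : I, ∀ i j k : I, i₀ ≤ i → i < j → j < k → v (a i - a j) < v (a j - a k)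

/-- `x` is a pseudo-limit of the sequence `a` if eventually
`v (a i - x) = v (a i - a j)` for `i < j`. -/
def IsPseudoLimit {G Γ I : Type*} [AddCommGroup G] [LinearOrder Γ] [LinearOrder I]
    (v : G → Γ) (a : I → G) (x : G) : Prop :=
  ∃ i₀ : I, ∀ i j : I, i₀ ≤ i → i < j → v (a i - x) = v (a i - a j)

/-!
Write `m • a i - g = m • (a i - g') - (g - m • g')`, where `g'` realises the maximum
`δ = v (g - m • g')` of `Δ_m(g)`. Maximality bounds `v (m • a i - g)` by `δ`, and the
ultrametric inequality then forces `v (m • a i - g) = min (v (m • (a i - g'))) δ`, which for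
`m > 0` is `min (v (a i - g')) δ` by ℤ-invariance. Since `g'` is not a pseudo-limit,
`v (a i - g')` is eventually constant (Kaplansky's dichotomy), hence so is `v (m • a i - g)`.
-/

namespace IsValuedGroup

variable {G Γ : Type*} [AddCommGroup G] [LinearOrder Γ] [OrderTop Γ] {v : G → Γ}

theorem map_zero (hv : IsValuedGroup v) : v 0 = ⊤ := (hv.eq_top_iff 0).2 rfl

theorem map_neg (hv : IsValuedGroup v) (x : G) : v (-x) = v x := by
  have le_map_neg : ∀ y : G, v y ≤ v (-y) := fun y => by
    simpa [hv.map_zero] using hv.min_le_sub 0 y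
  exact le_antisymm (by simpa using le_map_neg (-x)) (le_map_neg x)

theorem map_sub_comm (hv : IsValuedGroup v) (x y : G) : v (x - y) = v (y - x) := by
  rw [← neg_sub, hv.map_neg]

theorem map_sub_eq_left (hv : IsValuedGroup v) {x y : G} (h : v x < v y) :
    v (x - y) = v x := by
  refine le_antisymm ?_ (min_eq_left h.le ▸ hv.min_le_sub x y)
  by_contra! hlt
  have hx := hv.min_le_sub (x - y) (-y)
  rw [sub_neg_eq_add, sub_add_cancel, hv.map_neg] at hx
  exact hx.not_gt (lt_min hlt h)

theorem map_add_eq_left (hv : IsValuedGroup v) {x y : G} (h : v x < v y) :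
    v (x + y) = v x := by
  rw [← sub_neg_eq_add, hv.map_sub_eq_left (by rwa [hv.map_neg])]

theorem map_sub_eq_min_of_le (hv : IsValuedGroup v) {x y : G} (h : v (x - y) ≤ v y) :
    v (x - y) = min (v x) (v y) := by
  rcases lt_trichotomy (v x) (v y) with hxy | hxy | hxy
  · rw [hv.map_sub_eq_left hxy, min_eq_left hxy.le]
  · rw [hxy, min_self]
    exact le_antisymm h (by simpa [hxy] using hv.min_le_sub x y)
  · rw [hv.map_sub_comm, hv.map_sub_eq_left hxy, min_eq_right hxy.le]

end IsValuedGroup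

variable {G Γ I : Type*} [AddCommGroup G] [LinearOrder Γ] [OrderTop Γ] [LinearOrder I]
  {v : G → Γ}

/-- Kaplansky's dichotomy: either some `v (a j - x)` falls to or below the gap `v (a i - a j)`
before it, and then `v (a k - x) = v (a j - x)` for all `k ≥ j`; or it never does, and then `x`
is a pseudo-limit. -/
theorem IsPseudoCauchy.exists_map_sub_eq_of_not_isPseudoLimit (hv : IsValuedGroup v)
    {a : I → G} (hpc : IsPseudoCauchy v a) {x : G} (hx : ¬IsPseudoLimit v a x) :
    ∃ (i₁ : I) (β : Γ), ∀ i, i₁ ≤ i → v (a i - x) = β := by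
  obtain ⟨i₀, hpc⟩ := hpc
  by_cases hdrop : ∃ i j, i₀ ≤ i ∧ i < j ∧ v (a j - x) ≤ v (a i - a j)
  · obtain ⟨i, j, hi, hij, hj⟩ := hdrop
    refine ⟨j, v (a j - x), fun k hjk => ?_⟩
    rcases hjk.eq_or_lt with rfl | hjk
    · rfl
    rw [show a k - x = (a j - x) - (a j - a k) by abel,
      hv.map_sub_eq_left (hj.trans_lt (hpc i j k hi hij hjk))]
  · push Not at hdrop
    refine absurd ⟨i₀, fun i j hi hij => ?_⟩ hx
    rw [show a i - x = (a i - a j) + (a j - x) by abel,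
      hv.map_add_eq_left (hdrop i j hi hij)]

theorem IsValuedGroup.map_nsmul_sub_eq_min (hv : IsValuedGroup v) {g g' : G} {m : ℕ}
    (hmax : ∀ y : G, v (g - m • y) ≤ v (g - m • g')) (x : G) :
    v (m • x - g) = min (v (m • (x - g'))) (v (g - m • g')) := by
  have hsplit : m • x - g = m • (x - g') - (g - m • g') := by rw [smul_sub]; abel
  rw [hsplit]
  refine hv.map_sub_eq_min_of_le ?_
  rw [← hsplit, hv.map_sub_comm]
  exact hmax x

theorem eventually_constant_of_no_pseudoLimit_general {G Γ : Type u} [AddCommGroup G]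
    [LinearOrder Γ] [OrderTop Γ] (v : G → Γ) (hv : IsValuedGroup v)
    (hinv : ∀ (g : G) (n : ℕ), 0 < n → v (n • g) = v g)
    (hdelta : ∀ (g : G) (m : ℕ),
      ∃ δ : Γ, IsGreatest {δ' : Γ | ∃ g' : G, v (g - m • g') = δ'} δ)
    (I : Type u) [LinearOrder I]
    (a : I → G) (hpc : IsPseudoCauchy v a)
    (hnl : ∀ x : G, ¬ IsPseudoLimit v a x)
    (g : G) (m : ℕ) :
    ∃ (i₀ : I) (γ : Γ), ∀ i : I, i₀ ≤ i → v (m • a i - g) = γ := by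
  obtain ⟨δ, ⟨g', hg'⟩, hmax⟩ := hdelta g m
  have hval : ∀ i, v (m • a i - g) = min (v (m • (a i - g'))) δ := fun i =>
    hg' ▸ hv.map_nsmul_sub_eq_min (fun y => hg' ▸ hmax ⟨y, rfl⟩) (a i)
  obtain ⟨i₁, β, hβ⟩ := hpc.exists_map_sub_eq_of_not_isPseudoLimit hv (hnl g')
  rcases m.eq_zero_or_pos with rfl | hm
  · exact ⟨i₁, δ, fun i _ => by
      rw [hval, zero_nsmul, hv.map_zero, min_eq_right le_top]⟩
  · exact ⟨i₁, min β δ, fun i hi => by rw [hval, hinv _ _ hm, hβ i hi]⟩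

/-- Let `G` be a ℤ-invariant valued abelian group in which every set
`Δ_m(g) = {v (g - m • g') : g' ∈ G}` admits a maximum, and let `(a_i)_{i ∈ I}` be a
pseudo-Cauchy sequence in `G` which has no pseudo-limit in `G`. Then for every `g ∈ G` and
every `m ∈ ℕ` the sequence `(v (m • a_i - g))_{i ∈ I}` is eventually constant. -/
theorem eventually_constant_of_no_pseudoLimit {G Γ : Type u} [AddCommGroup G]
    [LinearOrder Γ] [OrderTop Γ] (v : G → Γ) (hv : IsValuedGroup v)
    (hinv : ∀ (g : G) (n : ℕ), 0 < n → v (n • g) = v g)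
    (hdelta : ∀ (g : G) (m : ℕ),
      ∃ δ : Γ, IsGreatest {δ' : Γ | ∃ g' : G, v (g - m • g') = δ'} δ)
    (I : Type u) [LinearOrder I] [WellFoundedLT I] [NoMaxOrder I] [Nonempty I]
    (a : I → G) (hpc : IsPseudoCauchy v a)
    (hnl : ∀ x : G, ¬ IsPseudoLimit v a x)
    (g : G) (m : ℕ) :
    ∃ (i₀ : I) (γ : Γ), ∀ i : I, i₀ ≤ i → v (m • a i - g) = γ :=
  eventually_constant_of_no_pseudoLimit_general v hv hinv hdelta I a hpc hnl g m
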